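/- Let G be a profinite group and w = w(x₁,…,x_k) a group word. Then the abstract verbal subgroup w(G), generated algebraically by all values w(g₁,…,g_k) with g_i ∈ G, is closed in G if and only if there exists a natural number n such that w has width n in every continuous finite quotient of G, i.e. in every quotient Q = G/N with N an open normal subgroup, every element of w(Q) is a product of n elements of the form w(q₁,…,q_k)^{±1}. -/

import Mathlib

/-- The set of `w`-values in `G`: elements of the form `w(g₁,…,g_k)^{±1}`. -/
def wordValues {k : ℕ} (w : FreeGroup (Fin k)) (G : Type*) [Group G] : Set G :=
  {x : G | ∃ g : Fin k → G, FreeGroup.lift g w = x ∨ (FreeGroup.lift g w)⁻¹ = x}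

/-- The verbal subgroup `w(G)`: the subgroup generated *algebraically* by all values of
the word `w` in `G`. -/
def verbalSubgroup {k : ℕ} (w : FreeGroup (Fin k)) (G : Type*) [Group G] : Subgroup G :=
  Subgroup.closure (wordValues w G)

/-- The word `w` has width `n` in `G` if every element of the verbal subgroup `w(G)` is a
product of `n` `w`-values. -/
def HasWidth {k : ℕ} (w : FreeGroup (Fin k)) (G : Type*) [Group G] (n : ℕ) : Prop :=
  ∀ x ∈ verbalSubgroup w G, ∃ l : List G,
    l.length = n ∧ (∀ y ∈ l, y ∈ wordValues w G) ∧ l.prod = x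

/-!
Let `S n` be the set of products of `n` word values. Each `S n` is compact, being a continuous
image of a power of `G`, and `w(G) = ⋃ n, S n`. If `w(G)` is closed, it is a compact group, so by
Baire some `S n` has nonempty interior `T` in it; the open sets `S m * T` increase and cover
`w(G)`, so by compactness `w(G) = S m * T ⊆ S (m + n)`, and this width descends to quotients.
Conversely, if `w` has width `n` in every `G/N`, then `w(G) ⊆ S n * N` for every open normal `N`;
as the open normal subgroups of a profinite group form a basis at `1` and `S n` is closed,
`w(G) = S n` is closed.
-/

open Pointwise

section Pointwise

variable {G : Type*}

theorem Set.mem_pow_iff_exists_list [Monoid G] {s : Set G} {n : ℕ} {x : G} :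
    x ∈ s ^ n ↔ ∃ l : List G, l.length = n ∧ (∀ y ∈ l, y ∈ s) ∧ l.prod = x := by
  rw [Set.mem_pow]
  constructor
  · rintro ⟨f, rfl⟩
    exact ⟨List.ofFn fun i => (f i : G), List.length_ofFn, by simp [List.mem_ofFn], rfl⟩
  · rintro ⟨l, rfl, hl, rfl⟩
    exact ⟨fun i => ⟨l[i], hl _ (List.getElem_mem _)⟩, congrArg List.prod List.ofFn_getElem⟩

theorem Subgroup.exists_mem_pow_of_mem_closure [Group G] {s : Set G} (hs : s⁻¹ ⊆ s) {x : G}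
    (hx : x ∈ Subgroup.closure s) : ∃ n, x ∈ s ^ n := by
  induction hx using Subgroup.closure_induction with
  | mem y hy => exact ⟨1, by rwa [pow_one]⟩
  | one => exact ⟨0, by rw [pow_zero]; rfl⟩
  | mul a b _ _ ha hb =>
    obtain ⟨m, ha⟩ := ha
    obtain ⟨n, hb⟩ := hb
    exact ⟨m + n, by rw [pow_add]; exact Set.mul_mem_mul ha hb⟩
  | inv a _ ha =>
    obtain ⟨n, ha⟩ := ha
    refine ⟨n, Set.pow_subset_pow_left hs ?_⟩
    rw [inv_pow]
    exact Set.inv_mem_inv.mpr ha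

theorem IsCompact.pow [Monoid G] [TopologicalSpace G] [ContinuousMul G] {s : Set G}
    (hs : IsCompact s) : ∀ n : ℕ, IsCompact (s ^ n)
  | 0 => by rw [pow_zero]; exact isCompact_singleton
  | n + 1 => by rw [pow_succ]; exact (hs.pow n).mul hs

end Pointwise

theorem exists_eq_univ_of_iUnion_eq_univ {W : Type*} [Group W] [TopologicalSpace W]
    [ContinuousMul W] [CompactSpace W] [BaireSpace W] {S : ℕ → Set W}
    (hclosed : ∀ n, IsClosed (S n)) (hmono : Monotone S)
    (hmul : ∀ m n, S m * S n ⊆ S (m + n)) (hcover : ⋃ n, S n = Set.univ) :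
    ∃ m, S m = Set.univ := by
  obtain ⟨n, u, hu⟩ := nonempty_interior_of_iUnion_of_closed hclosed hcover
  have hcover' : Set.univ ⊆ ⋃ m, S m * interior (S n) := by
    intro x _
    obtain ⟨m, hm⟩ := Set.mem_iUnion.mp (hcover.ge (Set.mem_univ (x * u⁻¹)))
    exact Set.mem_iUnion.mpr ⟨m, x * u⁻¹, hm, u, hu, inv_mul_cancel_right x u⟩
  obtain ⟨m, hm⟩ := isCompact_univ.elim_directed_cover _ (fun m => isOpen_interior.mul_left)
    hcover' (Monotone.directed_le fun a b hab => Set.mul_subset_mul_right (hmono hab))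
  exact ⟨m + n, Set.eq_univ_of_univ_subset <| hm.trans <|
    (Set.mul_subset_mul_left interior_subset).trans (hmul m n)⟩

theorem IsClosed.mem_of_forall_mem_mul_openNormalSubgroup {G : Type*} [Group G]
    [TopologicalSpace G] [IsTopologicalGroup G] [CompactSpace G] [TotallyDisconnectedSpace G]
    {C : Set G} (hC : IsClosed C) {x : G} (hx : ∀ N : OpenNormalSubgroup G, x ∈ C * N) :
    x ∈ C := by
  by_contra hxC
  have hU : IsOpen ((fun n => x * n⁻¹) ⁻¹' Cᶜ) :=
    hC.isOpen_compl.preimage (continuous_const.mul continuous_inv)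
  obtain ⟨N, hN⟩ := ProfiniteGrp.exist_openNormalSubgroup_sub_open_nhds_of_one hU (by simpa)
  obtain ⟨c, hc, n, hn, rfl⟩ := hx N
  exact hN hn (by simpa using hc)

section WordValues

variable {k : ℕ} (w : FreeGroup (Fin k))

theorem one_mem_wordValues (G : Type*) [Group G] : (1 : G) ∈ wordValues w G :=
  ⟨1, Or.inl (DFunLike.congr_fun (FreeGroup.ext_hom (FreeGroup.lift 1) 1 fun _ => by simp) w)⟩

theorem inv_wordValues_subset (G : Type*) [Group G] : (wordValues w G)⁻¹ ⊆ wordValues w G := by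
  rintro x ⟨g, h | h⟩
  · exact ⟨g, Or.inr (by rw [h, inv_inv])⟩
  · exact ⟨g, Or.inl (by rw [← inv_inj, h])⟩

theorem wordValues_eq_range_union_inv (G : Type*) [Group G] :
    wordValues w G = Set.range (fun g : Fin k → G => FreeGroup.lift g w) ∪
      (Set.range fun g : Fin k → G => FreeGroup.lift g w)⁻¹ := by
  ext x
  simp only [wordValues, Set.mem_ofPred_eq, Set.mem_union, Set.mem_range, Set.mem_inv,
    ← exists_or, inv_eq_iff_eq_inv]

theorem continuous_freeGroup_lift_apply (G : Type*) [Group G] [TopologicalSpace G]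
    [IsTopologicalGroup G] :
    Continuous fun g : Fin k → G => FreeGroup.lift g w := by
  induction w using FreeGroup.induction_on with
  | C1 => simpa only [map_one] using continuous_const
  | of a => simpa only [FreeGroup.lift_apply_of] using continuous_apply a
  | inv_of a _ =>
    simp only [map_inv, FreeGroup.lift_apply_of]
    exact (continuous_apply a).inv
  | mul x y hx hy =>
    simp only [map_mul]
    exact hx.mul hy

theorem isCompact_wordValues (G : Type*) [Group G] [TopologicalSpace G] [IsTopologicalGroup G]
    [CompactSpace G] : IsCompact (wordValues w G) := by
  rw [wordValues_eq_range_union_inv]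
  exact (isCompact_range (continuous_freeGroup_lift_apply w G)).union
    (isCompact_range (continuous_freeGroup_lift_apply w G)).inv

theorem image_wordValues {G H : Type*} [Group G] [Group H] {f : G →* H}
    (hf : Function.Surjective f) : f '' wordValues w G = wordValues w H := by
  have hlift (g : Fin k → G) : f (FreeGroup.lift g w) = FreeGroup.lift (f ∘ g) w :=
    DFunLike.congr_fun (FreeGroup.ext_hom (f.comp (FreeGroup.lift g)) _ (by simp)) w
  ext y
  constructor
  · rintro ⟨x, ⟨g, rfl | rfl⟩, rfl⟩
    · exact ⟨f ∘ g, Or.inl (hlift g).symm⟩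
    · exact ⟨f ∘ g, Or.inr (by rw [map_inv, hlift])⟩
  · rintro ⟨g, h | h⟩
    · obtain ⟨g', rfl⟩ := (Function.Surjective.comp_left hf) g
      exact ⟨_, ⟨g', Or.inl rfl⟩, by rw [hlift, h]⟩
    · obtain ⟨g', rfl⟩ := (Function.Surjective.comp_left hf) g
      exact ⟨_, ⟨g', Or.inr rfl⟩, by rw [map_inv, hlift, h]⟩

theorem map_verbalSubgroup {G H : Type*} [Group G] [Group H] {f : G →* H}
    (hf : Function.Surjective f) : (verbalSubgroup w G).map f = verbalSubgroup w H := by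
  rw [verbalSubgroup, MonoidHom.map_closure, image_wordValues w hf, verbalSubgroup]

theorem hasWidth_iff_subset_pow (G : Type*) [Group G] (n : ℕ) :
    HasWidth w G n ↔ (verbalSubgroup w G : Set G) ⊆ wordValues w G ^ n := by
  simp only [HasWidth, Set.subset_def, SetLike.mem_coe, Set.mem_pow_iff_exists_list]

theorem verbalSubgroup_eq_pow_of_hasWidth {G : Type*} [Group G] {n : ℕ}
    (h : HasWidth w G n) : (verbalSubgroup w G : Set G) = wordValues w G ^ n :=
  ((hasWidth_iff_subset_pow w G n).mp h).antisymm (Subgroup.pow_subset Subgroup.subset_closure)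

theorem HasWidth.of_surjective {G H : Type*} [Group G] [Group H] {f : G →* H}
    (hf : Function.Surjective f) {n : ℕ} (h : HasWidth w G n) : HasWidth w H n := by
  rw [hasWidth_iff_subset_pow, ← map_verbalSubgroup w hf, Subgroup.coe_map,
    verbalSubgroup_eq_pow_of_hasWidth w h, Set.image_pow, image_wordValues w hf]

theorem exists_hasWidth_of_isClosed {G : Type*} [Group G] [TopologicalSpace G]
    [IsTopologicalGroup G] [CompactSpace G] [T2Space G]
    (hc : IsClosed (verbalSubgroup w G : Set G)) : ∃ n, HasWidth w G n := by
  have : CompactSpace (verbalSubgroup w G) := isCompact_iff_compactSpace.mp hc.isCompact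
  obtain ⟨n, hn⟩ := exists_eq_univ_of_iUnion_eq_univ (W := verbalSubgroup w G)
    (S := fun n => Subtype.val ⁻¹' (wordValues w G ^ n))
    (fun n => ((isCompact_wordValues w G).pow n).isClosed.preimage continuous_subtype_val)
    (fun a b hab => Set.preimage_mono (Set.pow_subset_pow_right (one_mem_wordValues w G) hab))
    (by
      rintro m n _ ⟨a, ha, b, hb, rfl⟩
      rw [Set.mem_preimage, Subgroup.coe_mul, pow_add]
      exact Set.mul_mem_mul ha hb)
    (Set.iUnion_eq_univ_iff.mpr fun x =>
      Subgroup.exists_mem_pow_of_mem_closure (inv_wordValues_subset w G) x.2)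
  refine ⟨n, (hasWidth_iff_subset_pow w G n).mpr fun x hx => ?_⟩
  simpa using hn.ge (Set.mem_univ ⟨x, hx⟩)

theorem hasWidth_of_forall_openNormalSubgroup {G : Type*} [Group G] [TopologicalSpace G]
    [IsTopologicalGroup G] [CompactSpace G] [TotallyDisconnectedSpace G] {n : ℕ}
    (h : ∀ N : OpenNormalSubgroup G, HasWidth w (G ⧸ N.toSubgroup) n) : HasWidth w G n := by
  refine (hasWidth_iff_subset_pow w G n).mpr fun x hx =>
    ((isCompact_wordValues w G).pow n).isClosed.mem_of_forall_mem_mul_openNormalSubgroup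
      fun N => ?_
  have hsurj := QuotientGroup.mk'_surjective N.toSubgroup
  have hxN :
      (x : G ⧸ N.toSubgroup) ∈ QuotientGroup.mk' N.toSubgroup '' (wordValues w G ^ n) := by
    rw [Set.image_pow, image_wordValues w hsurj]
    refine (hasWidth_iff_subset_pow w _ n).mp (h N) ?_
    rw [← map_verbalSubgroup w hsurj]
    exact Subgroup.mem_map_of_mem _ hx
  exact (QuotientGroup.preimage_image_mk_eq_mul N.toSubgroup _).subset hxN

end WordValues

/-- **(B. Hartley)** Let `G` be a profinite group and `w` a group word. The (algebraic)
verbal subgroup `w(G)` is closed in `G` if and only if there is `n` such that `w` has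
width `n` in every continuous finite quotient of `G`, i.e. in every quotient `G/N` with
`N` an open normal subgroup. -/
theorem verbal_subgroup_closed_iff_uniform_width
    (G : Type*) [Group G] [TopologicalSpace G] [IsTopologicalGroup G]
    [CompactSpace G] [T2Space G] [TotallyDisconnectedSpace G]
    {k : ℕ} (w : FreeGroup (Fin k)) :
    IsClosed ((verbalSubgroup w G : Subgroup G) : Set G) ↔
      ∃ n : ℕ, ∀ (N : Subgroup G) (_ : N.Normal), IsOpen (N : Set G) →
        HasWidth w (G ⧸ N) n := by
  constructor
  · intro hc
    obtain ⟨n, hn⟩ := exists_hasWidth_of_isClosed w hc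
    exact ⟨n, fun N _ _ => hn.of_surjective w (QuotientGroup.mk'_surjective N)⟩
  · rintro ⟨n, hn⟩
    have hwidth := hasWidth_of_forall_openNormalSubgroup w fun N =>
      hn N.toSubgroup N.isNormal' N.toOpenSubgroup.isOpen
    rw [verbalSubgroup_eq_pow_of_hasWidth w hwidth]
    exact ((isCompact_wordValues w G).pow n).isClosed
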